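/- Let ω := e^{2πi/3}, Λ := ℤω + ℤ ⊂ ℂ, and Λ* := {γ ∈ ℂ : ⟨γ,λ⟩ ∈ 2πℤ for all λ ∈ Λ}. Let k ∈ ℂ with k ∉ Λ*. If u : ℂ → ℂ is smooth, Λ-periodic, and satisfies (2D_{z̄}+k)((2D_{z̄}+k)u) = 0 identically, then u = 0. -/

import Mathlib

/-- `⟨z,w⟩ = Re (z·w̄)`. -/
noncomputable def ip (z w : ℂ) : ℝ := (z * (starRingEnd ℂ) w).re

/-- `(2D_{z̄}f)(z) = (1/i)(∂_{x₁}f(z) + i∂_{x₂}f(z))`, identifying `ℂ ≅ ℝ²`. -/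
noncomputable def Dbar2 (f : ℂ → ℂ) (z : ℂ) : ℂ :=
  Complex.I⁻¹ * (fderiv ℝ f z 1 + Complex.I * fderiv ℝ f z Complex.I)

noncomputable def omega : ℂ := Complex.exp (2 * Real.pi * Complex.I / 3)

/-- `Λ = ℤω ⊕ ℤ`. -/
noncomputable def Lambda : Set ℂ := {w | ∃ m n : ℤ, w = (m : ℂ) * omega + (n : ℂ)}

/-- The dual lattice `Λ* = {γ : ⟨γ,λ⟩ ∈ 2πℤ for all λ ∈ Λ}`. -/
noncomputable def LambdaStar : Set ℂ :=
  {γ | ∀ l ∈ Lambda, ∃ n : ℤ, ip γ l = 2 * Real.pi * (n : ℝ)}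


/-!
Conjugating by the unimodular phase `e^{i⟨z,k⟩}` removes the zeroth-order term:
`2D_{z̄}(e^{i⟨z,k⟩} v) = e^{i⟨z,k⟩} (2D_{z̄} + k) v`. Hence a bounded solution `v` of
`(2D_{z̄} + k) v = 0` makes `e^{i⟨z,k⟩} v` a bounded entire function, constant by Liouville's
theorem, so `v = c e^{-i⟨z,k⟩}`. Such a `v` is `Λ`-periodic only if `c = 0` or `k ∈ Λ*`.
Off the dual lattice, `2D_{z̄} + k` is therefore injective on differentiable `Λ`-periodic
functions; apply this to `(2D_{z̄} + k) u` and then to `u`.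
-/

open Complex Set Bornology

lemma ip_comm (z w : ℂ) : ip z w = ip w z := by
  simp only [ip, mul_re, conj_re, conj_im]
  ring

lemma contDiff_Dbar2 {f : ℂ → ℂ} {n : WithTop ℕ∞} (hf : ContDiff ℝ (n + 1) f) :
    ContDiff ℝ n (Dbar2 f) := by
  have hD := hf.fderiv_right (m := n) le_rfl
  exact contDiff_const.mul ((hD.clm_apply contDiff_const).add
    (contDiff_const.mul (hD.clm_apply contDiff_const)))

lemma Dbar2_add_of_periodic {f : ℂ → ℂ} {γ : ℂ} (hf : Function.Periodic f γ) (z : ℂ) :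
    Dbar2 f (z + γ) = Dbar2 f z := by
  simp only [Dbar2, ← fderiv_comp_add_right, hf.funext]

lemma Dbar2_mul {f g : ℂ → ℂ} {z : ℂ} (hf : DifferentiableAt ℝ f z)
    (hg : DifferentiableAt ℝ g z) :
    Dbar2 (fun w => f w * g w) z = Dbar2 f z * g z + f z * Dbar2 g z := by
  simp only [Dbar2, fderiv_fun_mul hf hg, add_apply, smul_apply, smul_eq_mul]
  ring

lemma differentiableAt_complex_of_Dbar2_eq_zero {f : ℂ → ℂ} {z : ℂ}
    (hf : DifferentiableAt ℝ f z) (h : Dbar2 f z = 0) : DifferentiableAt ℂ f z := by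
  refine differentiableAt_complex_iff_differentiableAt_real.2 ⟨hf, ?_⟩
  simp only [Dbar2, mul_eq_zero, inv_eq_zero, I_ne_zero, false_or] at h
  rw [smul_eq_mul]
  linear_combination -I * h + fderiv ℝ f z I * I_sq

lemma hasFDerivAt_exp_I_mul_ip (k z : ℂ) :
    HasFDerivAt (fun w => exp (I * ip w k))
      (exp (I * ip z k) • I • ofRealCLM.comp (k.re • reCLM + k.im • imCLM)) z := by
  have hip : (fun w => ip w k) = ⇑(k.re • reCLM + k.im • imCLM) := by
    ext w
    simp only [ip, mul_re, conj_re, conj_im, mul_neg, sub_neg_eq_add, add_apply, smul_apply,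
      reCLM_apply, smul_eq_mul, imCLM_apply]
    ring
  have hlin := (k.re • reCLM + k.im • imCLM).hasFDerivAt (x := z)
  rw [← hip] at hlin
  exact ((ofRealCLM.hasFDerivAt.comp z hlin).const_mul I).cexp

lemma Dbar2_exp_I_mul_ip (k z : ℂ) :
    Dbar2 (fun w => exp (I * ip w k)) z = k * exp (I * ip z k) := by
  rw [Dbar2, (hasFDerivAt_exp_I_mul_ip k z).fderiv]
  simp only [smul_apply, add_apply, ContinuousLinearMap.comp_apply, smul_eq_mul, ofRealCLM_apply,
    reCLM_apply, imCLM_apply, one_re, one_im, I_re, I_im, mul_one, mul_zero, add_zero, zero_add]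
  rw [inv_I]
  linear_combination (-(exp (I * ip z k) * (k.re + I * k.im))) * I_sq
    + exp (I * ip z k) * re_add_im k

lemma exp_I_mul_ip_mul_eq_of_Dbar2_add_mul_eq_zero {f : ℂ → ℂ} {k : ℂ}
    (hf : Differentiable ℝ f) (hb : IsBounded (range f)) (h : ∀ z, Dbar2 f z + k * f z = 0)
    (z : ℂ) : exp (I * ip z k) * f z = f 0 := by
  set W : ℂ → ℂ := fun w => exp (I * ip w k) * f w
  have he (w : ℂ) := (hasFDerivAt_exp_I_mul_ip k w).differentiableAt
  have hW : Differentiable ℂ W := fun w =>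
    differentiableAt_complex_of_Dbar2_eq_zero ((he w).mul (hf w)) <| by
      rw [Dbar2_mul (he w) (hf w), Dbar2_exp_I_mul_ip]
      linear_combination exp (I * ip w k) * h w
  have hWb : IsBounded (range W) := by
    obtain ⟨C, hC⟩ := isBounded_iff_forall_norm_le.1 hb
    refine isBounded_iff_forall_norm_le.2 ⟨C, ?_⟩
    rintro _ ⟨w, rfl⟩
    simpa [W, norm_exp_I_mul_ofReal] using hC _ (mem_range_self w)
  simpa [W, ip] using hW.apply_eq_apply_of_bounded hWb z 0

lemma one_mem_Lambda : (1 : ℂ) ∈ Lambda := ⟨0, 1, by simp⟩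

lemma omega_mem_Lambda : omega ∈ Lambda := ⟨1, 0, by simp⟩

lemma omega_im_pos : 0 < omega.im := by
  rw [omega, show 2 * (Real.pi : ℂ) * I / 3 = ((2 * Real.pi / 3 : ℝ) : ℂ) * I by push_cast; ring,
    exp_ofReal_mul_I_im]
  exact Real.sin_pos_of_pos_of_lt_pi (by positivity) (by linarith [Real.pi_pos])

lemma isBounded_range_of_periodic {α : Type*} [PseudoMetricSpace α] {f : ℂ → α} {τ : ℂ}
    (hf : Continuous f) (hτ : τ.im ≠ 0) (h1 : Function.Periodic f 1)
    (hτp : Function.Periodic f τ) : IsBounded (range f) := by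
  let p : ℝ × ℝ → ℂ := fun st => st.1 + st.2 * τ
  have hK : IsCompact (f '' (p '' (Icc 0 1 ×ˢ Icc 0 1))) :=
    ((isCompact_Icc.prod isCompact_Icc).image (by fun_prop)).image hf
  refine hK.isBounded.subset ?_
  rintro _ ⟨z, rfl⟩
  -- `(s, t)` are the coordinates of `z` in the real basis `(1, τ)`
  set t := z.im / τ.im
  set s := z.re - t * τ.re
  have hz : z = p (Int.fract s, Int.fract t) + ((⌊s⌋ : ℤ) * 1 + (⌊t⌋ : ℤ) * τ) := by
    have hst : z = s + t * τ := by
      apply Complex.ext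
      · simp [s]
      · simp [t, hτ]
    rw [hst]
    simp only [p, Int.fract]
    push_cast
    ring
  refine ⟨p (Int.fract s, Int.fract t), ⟨(Int.fract s, Int.fract t),
    ⟨⟨Int.fract_nonneg s, (Int.fract_lt_one s).le⟩, ⟨Int.fract_nonneg t, (Int.fract_lt_one t).le⟩⟩,
    rfl⟩, ?_⟩
  rw [hz, (h1.int_mul _).add_period (hτp.int_mul _)]

lemma eq_zero_of_Dbar2_add_mul_eq_zero {f : ℂ → ℂ} {k : ℂ} (hk : k ∉ LambdaStar)
    (hf : Differentiable ℝ f) (hper : ∀ z, ∀ γ ∈ Lambda, f (z + γ) = f z)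
    (h : ∀ z, Dbar2 f z + k * f z = 0) : f = 0 := by
  have hb : IsBounded (range f) := isBounded_range_of_periodic hf.continuous
    omega_im_pos.ne' (fun z => hper z 1 one_mem_Lambda) (fun z => hper z omega omega_mem_Lambda)
  have hphase := exp_I_mul_ip_mul_eq_of_Dbar2_add_mul_eq_zero hf hb h
  have hf0 : f 0 = 0 := by
    by_contra hne
    refine hk fun γ hγ => ?_
    have hγ0 : f γ = f 0 := by simpa using hper 0 γ hγ
    have hexp : exp (I * ip γ k) = 1 := by
      rw [← mul_eq_right₀ hne, ← hγ0]
      exact (hphase γ).trans hγ0.symm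
    obtain ⟨n, hn⟩ := exp_eq_one_iff.1 hexp
    have hn' : ((ip γ k : ℝ) : ℂ) = ((2 * Real.pi * n : ℝ) : ℂ) :=
      mul_left_cancel₀ I_ne_zero (by push_cast; linear_combination hn)
    exact ⟨n, by rw [ip_comm]; exact_mod_cast hn'⟩
  funext z
  simpa [hf0, exp_ne_zero] using hphase z

/-- for `k ∉ Λ*`, the smooth `Λ`-periodic kernel of `(2D_{z̄}+k)²` is trivial. -/
theorem kernel_trivial_off_dual_lattice
    (k : ℂ) (hk : k ∉ LambdaStar)
    (u : ℂ → ℂ) (hu : ContDiff ℝ (⊤ : ℕ∞) u)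
    (hper : ∀ z : ℂ, ∀ γ ∈ Lambda, u (z + γ) = u z)
    (hker : ∀ z : ℂ, Dbar2 (fun w => Dbar2 u w + k * u w) z + k * (Dbar2 u z + k * u z) = 0) :
    u = 0 := by
  have hu2 : ContDiff ℝ (1 + 1) u := hu.of_le (WithTop.coe_le_coe.2 le_top)
  have hv : (fun w => Dbar2 u w + k * u w) = 0 := by
    refine eq_zero_of_Dbar2_add_mul_eq_zero hk ?_ ?_ hker
    · exact ((contDiff_Dbar2 hu2).add (contDiff_const.mul (hu2.of_le le_self_add))).differentiable
        one_ne_zero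
    · intro z γ hγ
      simp only [Dbar2_add_of_periodic (fun w => hper w γ hγ), hper z γ hγ]
  exact eq_zero_of_Dbar2_add_mul_eq_zero hk (hu.differentiable (by simp)) hper (congrFun hv)
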